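/- There is no X ∈ W₀ such that the function z ↦ X(z) - z⁻¹ • 1 tends to a limit as z → 0 along ℂ ∖ Λ. In particular, no element of W₀ behaves as z⁻¹·I + O(z) at the origin. -/

import Mathlib

noncomputable section

open Filter Topology

attribute [local instance] Matrix.normedAddCommGroup Matrix.normedSpace

/-- The Pauli matrix σ₁. -/
def σ1 : Matrix (Fin 2) (Fin 2) ℂ := !![0, 1; 1, 0]

/-- The Pauli matrix σ₂. -/
def σ2 : Matrix (Fin 2) (Fin 2) ℂ := !![0, -Complex.I; Complex.I, 0]

/-- The Pauli matrix σ₃. -/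
def σ3 : Matrix (Fin 2) (Fin 2) ℂ := !![1, 0; 0, -1]

/-- The period lattice Λ = 2ω₁ℤ + 2ω₃ℤ. -/
def lattice (ω₁ ω₃ : ℂ) : Set ℂ :=
  {z | ∃ m n : ℤ, z = 2 * (m : ℂ) * ω₁ + 2 * (n : ℂ) * ω₃}

/-- Twisted double periodicity on a set `S`: `X (z + 2ω_a) = σ_a * X z * σ_a` for `a = 1,2,3`,
with `ω₂ = -ω₁ - ω₃`. -/
def TwistedPeriodicOn (ω₁ ω₃ : ℂ) (S : Set ℂ)
    (X : ℂ → Matrix (Fin 2) (Fin 2) ℂ) : Prop :=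
  (∀ z ∈ S, X (z + 2 * ω₁) = σ1 * X z * σ1) ∧
  (∀ z ∈ S, X (z + 2 * (-ω₁ - ω₃)) = σ2 * X z * σ2) ∧
  (∀ z ∈ S, X (z + 2 * ω₃) = σ3 * X z * σ3)

/-- The vacuum point `W₀`: functions holomorphic on `ℂ ∖ Λ` and twisted doubly periodic there. -/
def W0 (ω₁ ω₃ : ℂ) : Set (ℂ → Matrix (Fin 2) (Fin 2) ℂ) :=
  {X | DifferentiableOn ℂ X (lattice ω₁ ω₃)ᶜ ∧
       TwistedPeriodicOn ω₁ ω₃ (lattice ω₁ ω₃)ᶜ X}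

/-!
Write the lattice as `Λ = ℤω + ℤω'` with `ω = 2ω₁`, `ω' = 2ω₃`. Since `σ₁² = σ₃² = 1`, half the
trace of `X` would be a `Λ`-periodic function `f`, holomorphic off `Λ`, with `f z - 1/z → c` at
`0`; we show that no such `f` exists.

Removing the singularities at `Λ` and applying Liouville's theorem, a `Λ`-periodic function that is
holomorphic off `Λ` and has a limit at `0` is constant. Applied to `f z + f (-z)`, this makes
`o = f - c` odd, so `o` vanishes at the half periods `ω/2` and `ω'/2`. Applied to `o² + o'`, whose
double poles cancel, it shows that `o` solves a Riccati equation `o' = K - o²`. By uniqueness for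
this equation and the identity theorem, `o (ω/2 + z) = o (ω'/2 + z)`, so `o` is invariant under
translation by `ω/2 - ω'/2 ∉ Λ`, which is incompatible with its pole at `0`.
-/

open Set Metric Function

theorem Function.Periodic.deriv {𝕜 F : Type*} [NontriviallyNormedField 𝕜] [NormedAddCommGroup F]
    [NormedSpace 𝕜 F] {f : 𝕜 → F} {c : 𝕜} (h : f.Periodic c) : (deriv f).Periodic c :=
  fun x => by rw [← deriv_comp_add_const, h.funext]

theorem Function.Periodic.eq_zero_of_odd_at_half {f : ℂ → ℂ} {ω : ℂ} (h : f.Periodic ω)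
    (hodd : f (-(ω / 2)) = -f (ω / 2)) : f (ω / 2) = 0 := by
  have := h (-(ω / 2))
  rw [show -(ω / 2) + ω = ω / 2 by ring, hodd] at this
  exact CharZero.eq_neg_self_iff.mp this

theorem tendsto_sub_nhdsNE {G : Type*} [AddGroup G] [TopologicalSpace G]
    [IsTopologicalAddGroup G] (x : G) : Tendsto (· - x) (𝓝[≠] x) (𝓝[≠] 0) := by
  have := map_subRight_nhdsNE (c := x) (a := x)
  rw [sub_self] at this
  exact this.le

theorem tendsto_neg_nhdsNE_zero {G : Type*} [AddGroup G] [TopologicalSpace G] [ContinuousNeg G] :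
    Tendsto Neg.neg (𝓝[≠] (0 : G)) (𝓝[≠] 0) := by
  have := Filter.neg_nhdsNE (a := (0 : G))
  rw [neg_zero] at this
  exact this.le

theorem exists_tendsto_sq_add_deriv_of_tendsto_sub_inv {o : ℂ → ℂ}
    (hd : ∀ᶠ z in 𝓝[≠] 0, DifferentiableAt ℂ o z)
    (ho : Tendsto (fun z => o z - z⁻¹) (𝓝[≠] 0) (𝓝 0)) :
    ∃ K, Tendsto (fun z => o z ^ 2 + deriv o z) (𝓝[≠] 0) (𝓝 K) := by
  set h := update (fun z => o z - z⁻¹) 0 0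
  have hoh : EqOn o (fun z => z⁻¹ + h z) {0}ᶜ := fun z hz => by
    simp [h, update_of_ne (show z ≠ 0 from hz)]
  have hh : AnalyticAt ℂ h 0 := by
    refine Complex.analyticAt_of_differentiable_on_punctured_nhds_of_continuousAt ?_
      (continuousAt_update_same.mpr ho)
    filter_upwards [hd, self_mem_nhdsWithin] with z hz hz0
    refine (hz.sub (differentiableAt_inv hz0)).congr_of_eventuallyEq ?_
    filter_upwards [isOpen_compl_singleton.mem_nhds hz0] with w hw
    exact update_of_ne hw _ _
  have hh0 : h 0 = 0 := update_self _ _ _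
  -- `o² + o' = 2 h z / z + h² + h'`: the double poles cancel.
  have hslope : Tendsto (fun z => z⁻¹ * h z) (𝓝[≠] 0) (𝓝 (deriv h 0)) :=
    (hasDerivAt_iff_tendsto_slope.mp hh.differentiableAt.hasDerivAt).congr fun z => by
      simp [slope_def_field, hh0, div_eq_inv_mul]
  have hsq : Tendsto (fun z => h z ^ 2) (𝓝[≠] 0) (𝓝 0) := by
    simpa [hh0] using (hh.continuousAt.tendsto.mono_left nhdsWithin_le_nhds).pow 2
  have hderiv : Tendsto (deriv h) (𝓝[≠] 0) (𝓝 (deriv h 0)) :=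
    hh.deriv.continuousAt.tendsto.mono_left nhdsWithin_le_nhds
  refine ⟨2 * deriv h 0 + 0 + deriv h 0,
    (((hslope.const_mul 2).add hsq).add hderiv).congr' ?_⟩
  filter_upwards [nhdsWithin_le_nhds hh.eventually_analyticAt, self_mem_nhdsWithin]
    with z hz hz0
  have hzo : o =ᶠ[𝓝 z] fun w => w⁻¹ + h w :=
    eventually_of_mem (isOpen_compl_singleton.mem_nhds hz0) hoh
  rw [hzo.deriv_eq, deriv_fun_add (differentiableAt_inv hz0) hz.differentiableAt, deriv_inv,
    hoh hz0]
  field_simp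
  ring

theorem not_eventually_const_add_eq_of_tendsto_sub_inv {o : ℂ → ℂ} {p : ℂ}
    (hp : ContinuousAt o p) (hlim : Tendsto (fun z => o z - z⁻¹) (𝓝[≠] 0) (𝓝 0)) :
    ¬ ∀ᶠ z in 𝓝[≠] 0, o (p + z) = o z := by
  intro hev
  have hshift : Tendsto (fun z => o (p + z)) (𝓝[≠] 0) (𝓝 (o p)) := by
    refine (hp.tendsto.comp ?_).mono_left nhdsWithin_le_nhds
    simpa using (continuous_const_add p).tendsto 0
  have hinv : Tendsto (fun z : ℂ => z⁻¹) (𝓝[≠] 0) (𝓝 (o p)) := by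
    simpa using (hshift.congr' hev).sub hlim
  exact hinv.not_tendsto (disjoint_nhds_cobounded _) tendsto_inv₀_nhdsNE_zero

theorem eqOn_zero_of_hasDerivAt_mul {D S : ℂ → ℂ} {c : ℂ} {r : ℝ}
    (hS : DifferentiableOn ℂ S (ball c r)) (hD : ∀ z ∈ ball c r, HasDerivAt D (S z * D z) z)
    (hc : D c = 0) : EqOn D 0 (ball c r) := by
  obtain ⟨A, hA⟩ := hS.isExactOn_ball
  have hW : ∀ z ∈ ball c r, HasDerivAt (fun z => D z * Complex.exp (-A z)) 0 z := by
    intro z hz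
    refine ((hD z hz).mul (hA z hz).neg.cexp).congr_deriv ?_
    ring
  intro z hz
  have hconst := isOpen_ball.is_const_of_deriv_eq_zero (convex_ball c r).isPreconnected
    (fun w hw => (hW w hw).differentiableAt.differentiableWithinAt) (fun w hw => (hW w hw).deriv)
    hz (mem_ball_self (pos_of_mem_ball hz))
  simpa [hc, Complex.exp_ne_zero] using hconst

theorem eqOn_of_hasDerivAt_eq_sub_sq {u v : ℂ → ℂ} {K c : ℂ} {r : ℝ}
    (hu : ∀ z ∈ ball c r, HasDerivAt u (K - u z ^ 2) z)
    (hv : ∀ z ∈ ball c r, HasDerivAt v (K - v z ^ 2) z) (hc : u c = v c) :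
    EqOn u v (ball c r) := by
  have hS : DifferentiableOn ℂ (-(u + v)) (ball c r) := fun z hz =>
    ((hu z hz).differentiableAt.add (hv z hz).differentiableAt).neg.differentiableWithinAt
  have hD : ∀ z ∈ ball c r, HasDerivAt (u - v) ((-(u + v)) z * (u - v) z) z := fun z hz => by
    refine ((hu z hz).sub (hv z hz)).congr_deriv ?_
    simp only [Pi.neg_apply, Pi.add_apply, Pi.sub_apply]
    ring
  exact fun z hz => sub_eq_zero.mp (eqOn_zero_of_hasDerivAt_mul hS hD (sub_eq_zero.mpr hc) hz)

theorem eqOn_const_add_of_hasDerivAt_eq_sub_sq {f : ℂ → ℂ} {s : Set ℂ} {K a b : ℂ}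
    (hs : IsOpen s) (hsc : sᶜ.Countable) (hf : ∀ z ∈ s, HasDerivAt f (K - f z ^ 2) z)
    (ha : a ∈ s) (hb : b ∈ s) (hab : f a = f b) :
    EqOn (fun z => f (a + z)) (fun z => f (b + z)) {z | a + z ∈ s ∧ b + z ∈ s} := by
  set U := {z | a + z ∈ s ∧ b + z ∈ s}
  have hU : IsOpen U :=
    (hs.preimage (continuous_const_add a)).inter (hs.preimage (continuous_const_add b))
  have hUc : IsPreconnected U := by
    have : Uᶜ ⊆ (· - a) '' sᶜ ∪ (· - b) '' sᶜ := by
      intro z hz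
      rcases not_and_or.mp hz with hz | hz
      exacts [.inl ⟨a + z, hz, by ring⟩, .inr ⟨b + z, hz, by ring⟩]
    have := ((hsc.image _).union (hsc.image _)).mono this
    simpa using (this.isPathConnected_compl_of_one_lt_rank
      (by simp [Complex.rank_real_complex])).isConnected.isPreconnected
  have hder (c : ℂ) (z : ℂ) (hz : c + z ∈ s) :
      HasDerivAt (fun z => f (c + z)) (K - f (c + z) ^ 2) z :=
    (hf _ hz).comp_const_add c z
  have h0 : (0 : ℂ) ∈ U := by simpa [U] using ⟨ha, hb⟩
  obtain ⟨r, hr, hrU⟩ := isOpen_iff.mp hU 0 h0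
  have hball : EqOn (fun z => f (a + z)) (fun z => f (b + z)) (ball 0 r) :=
    eqOn_of_hasDerivAt_eq_sub_sq (fun z hz => hder a z (hrU hz).1)
      (fun z hz => hder b z (hrU hz).2) (by simpa using hab)
  have han (c : ℂ) (hc : ∀ z ∈ U, c + z ∈ s) : AnalyticOnNhd ℂ (fun z => f (c + z)) U :=
    DifferentiableOn.analyticOnNhd
      (fun z hz => (hder c z (hc z hz)).differentiableAt.differentiableWithinAt) hU
  exact (han a fun z hz => hz.1).eqOn_of_preconnected_of_eventuallyEq (han b fun z hz => hz.2)
    hUc h0 (eventually_of_mem (ball_mem_nhds 0 hr) hball)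

namespace PeriodPair

variable (L : PeriodPair)

lemma isOpen_compl_lattice : IsOpen (L.lattice : Set ℂ)ᶜ := L.isClosed_lattice.isOpen_compl

lemma compl_lattice_mem_nhdsNE (x : ℂ) : (L.lattice : Set ℂ)ᶜ ∈ 𝓝[≠] x := by
  filter_upwards [nhdsWithin_le_nhds (L.compl_lattice_sdiff_singleton_mem_nhds x),
    self_mem_nhdsWithin] with z hz hzx
  exact fun hzL => hz ⟨hzL, hzx⟩

lemma countable_lattice : (L.lattice : Set ℂ).Countable :=
  have : Countable L.lattice := L.latticeEquivProd.injective.countable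
  Set.to_countable _

lemma half_sub_half_notMem_lattice : L.ω₁ / 2 - L.ω₂ / 2 ∉ L.lattice := by
  have := (L.mul_ω₁_add_mul_ω₂_mem_lattice (α := 1 / 2) (β := -1 / 2)).not.mpr (by norm_num)
  convert this using 2
  push_cast
  ring

lemma periodic_of_mem_lattice {E : Type*} {f : ℂ → E} (h₁ : f.Periodic L.ω₁)
    (h₂ : f.Periodic L.ω₂) {l : ℂ} (hl : l ∈ L.lattice) : f.Periodic l := by
  obtain ⟨m, n, rfl⟩ := mem_lattice.mp hl
  exact (h₁.int_mul m).add_period (h₂.int_mul n)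

open scoped Classical in
lemma periodic_piecewise {E : Type*} {f g : ℂ → E} {ω : ℂ} (hω : ω ∈ L.lattice)
    (hf : ∀ z ∉ L.lattice, f (z + ω) = f z) (hg : g.Periodic ω) :
    ((L.lattice : Set ℂ).piecewise g f).Periodic ω := by
  intro z
  by_cases hz : z ∈ L.lattice
  · simp [hz, add_mem hz hω, hg z]
  · have : z + ω ∉ L.lattice := by rwa [add_mem_cancel_right hω]
    simp [hz, this, hf z hz]

lemma exists_isCompact_forall_exists_sub_mem :
    ∃ K : Set ℂ, IsCompact K ∧ ∀ z, ∃ l ∈ L.lattice, z - l ∈ K := by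
  refine ⟨closure (ZSpan.fundamentalDomain L.basis),
    (ZSpan.fundamentalDomain_isBounded L.basis).isCompact_closure, fun z => ?_⟩
  refine ⟨ZSpan.floor L.basis z, ?_, subset_closure ?_⟩
  · rw [L.lattice_eq_span_range_basis]
    exact (ZSpan.floor L.basis z).2
  · rw [← ZSpan.fract_apply]
    exact ZSpan.fract_mem_fundamentalDomain _ _

lemma isBounded_range_of_periodic {E : Type*} [NormedAddCommGroup E] {f : ℂ → E}
    (hf : Continuous f) (h₁ : f.Periodic L.ω₁) (h₂ : f.Periodic L.ω₂) :
    Bornology.IsBounded (range f) := by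
  obtain ⟨K, hK, hcover⟩ := L.exists_isCompact_forall_exists_sub_mem
  refine (hK.image hf).isBounded.subset ?_
  rintro _ ⟨z, rfl⟩
  obtain ⟨l, hl, hzl⟩ := hcover z
  exact ⟨z - l, hzl, (L.periodic_of_mem_lattice h₁ h₂ hl).sub_eq z⟩

open scoped Classical in
theorem eqOn_const_of_tendsto {E : Type*} [NormedAddCommGroup E] [NormedSpace ℂ E]
    [CompleteSpace E] {f : ℂ → E} {c : E} (hf : DifferentiableOn ℂ f (L.lattice : Set ℂ)ᶜ)
    (h₁ : f.Periodic L.ω₁) (h₂ : f.Periodic L.ω₂) (hc : Tendsto f (𝓝[≠] 0) (𝓝 c)) :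
    EqOn f (fun _ => c) (L.lattice : Set ℂ)ᶜ := by
  set g := (L.lattice : Set ℂ).piecewise (fun _ => c) f
  have hgf : EqOn g f (L.lattice : Set ℂ)ᶜ := piecewise_eqOn_compl _ _ _
  have hg : Differentiable ℂ g := by
    intro z
    by_cases hz : z ∈ L.lattice
    · have hs := L.compl_lattice_sdiff_singleton_mem_nhds z
      have hlim : Tendsto g (𝓝[≠] z) (𝓝 c) := by
        refine Tendsto.congr' (EventuallyEq.symm ?_) ((hc.comp (tendsto_sub_nhdsNE z)).congr
          fun w => (L.periodic_of_mem_lattice h₁ h₂ hz).sub_eq w)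
        filter_upwards [L.compl_lattice_mem_nhdsNE z] with w hw using hgf hw
      refine ((Complex.differentiableOn_compl_singleton_and_continuousAt_iff hs).mp
        ⟨(hf.congr hgf).mono ?_, ?_⟩).differentiableAt hs
      · rintro w ⟨hw, hwz⟩ hwL
        exact hw ⟨hwL, hwz⟩
      · have hgz : g z = c := piecewise_eq_of_mem _ _ _ hz
        rwa [← continuousWithinAt_compl_self, ContinuousWithinAt, hgz]
    · have hs := L.isOpen_compl_lattice.mem_nhds hz
      exact (hf.differentiableAt hs).congr_of_eventuallyEq (eventually_of_mem hs hgf)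
  have hbdd := L.isBounded_range_of_periodic hg.continuous
    (L.periodic_piecewise L.ω₁_mem_lattice (fun z _ => h₁ z) fun _ => rfl)
    (L.periodic_piecewise L.ω₂_mem_lattice (fun z _ => h₂ z) fun _ => rfl)
  intro z hz
  rw [← hgf hz, hg.apply_eq_apply_of_bounded hbdd z 0]
  exact piecewise_eq_of_mem _ _ _ (zero_mem _)

variable {L}

lemma odd_of_tendsto_sub_inv {f : ℂ → ℂ} (hf : DifferentiableOn ℂ f (L.lattice : Set ℂ)ᶜ)
    (h₁ : f.Periodic L.ω₁) (h₂ : f.Periodic L.ω₂)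
    (hlim : Tendsto (fun z => f z - z⁻¹) (𝓝[≠] 0) (𝓝 0)) :
    ∀ z ∉ L.lattice, f (-z) = -f z := by
  set g : ℂ → ℂ := fun w => f w + f (-w)
  have hneg : MapsTo Neg.neg (L.lattice : Set ℂ)ᶜ (L.lattice : Set ℂ)ᶜ := fun w hw hw' =>
    hw (by simpa using neg_mem hw')
  have hg : DifferentiableOn ℂ g (L.lattice : Set ℂ)ᶜ :=
    hf.add (hf.comp differentiable_neg.differentiableOn hneg)
  have hper {ω : ℂ} (h : f.Periodic ω) : g.Periodic ω := fun w => by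
    simp only [g, h w, neg_add', h.sub_eq]
  have hglim : Tendsto g (𝓝[≠] 0) (𝓝 0) := by
    simpa [Function.comp_def, g] using hlim.add (hlim.comp tendsto_neg_nhdsNE_zero)
  intro z hz
  have := L.eqOn_const_of_tendsto hg (hper h₁) (hper h₂) hglim hz
  simpa [g, eq_neg_iff_add_eq_zero, add_comm] using this

lemma exists_hasDerivAt_eq_sub_sq {f : ℂ → ℂ} (hf : DifferentiableOn ℂ f (L.lattice : Set ℂ)ᶜ)
    (h₁ : f.Periodic L.ω₁) (h₂ : f.Periodic L.ω₂)
    (hlim : Tendsto (fun z => f z - z⁻¹) (𝓝[≠] 0) (𝓝 0)) :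
    ∃ K, ∀ z ∉ L.lattice, HasDerivAt f (K - f z ^ 2) z := by
  have hfz {z : ℂ} (hz : z ∉ L.lattice) : DifferentiableAt ℂ f z :=
    hf.differentiableAt (L.isOpen_compl_lattice.mem_nhds hz)
  set q : ℂ → ℂ := fun z => f z ^ 2 + deriv f z
  have hq : DifferentiableOn ℂ q (L.lattice : Set ℂ)ᶜ :=
    (hf.pow 2).add (hf.analyticOnNhd L.isOpen_compl_lattice).deriv.differentiableOn
  have hper {ω : ℂ} (h : f.Periodic ω) : q.Periodic ω := fun z => by
    simp only [q, h z, h.deriv z]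
  obtain ⟨K, hK⟩ := exists_tendsto_sq_add_deriv_of_tendsto_sub_inv
    (eventually_of_mem (L.compl_lattice_mem_nhdsNE 0) fun z hz => hfz hz) hlim
  refine ⟨K, fun z hz => ?_⟩
  have hqz : f z ^ 2 + deriv f z = K := L.eqOn_const_of_tendsto hq (hper h₁) (hper h₂) hK hz
  rw [← hqz, add_sub_cancel_left]
  exact (hfz hz).hasDerivAt

lemma eventually_add_half_sub_half_eq {f : ℂ → ℂ} (hf : DifferentiableOn ℂ f (L.lattice : Set ℂ)ᶜ)
    (h₁ : f.Periodic L.ω₁) (h₂ : f.Periodic L.ω₂)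
    (hlim : Tendsto (fun z => f z - z⁻¹) (𝓝[≠] 0) (𝓝 0)) :
    ∀ᶠ z in 𝓝[≠] 0, f (L.ω₁ / 2 - L.ω₂ / 2 + z) = f z := by
  have hodd := odd_of_tendsto_sub_inv hf h₁ h₂ hlim
  obtain ⟨K, hK⟩ := exists_hasDerivAt_eq_sub_sq hf h₁ h₂ hlim
  have htrans := eqOn_const_add_of_hasDerivAt_eq_sub_sq L.isOpen_compl_lattice
    (by simpa using L.countable_lattice) hK L.ω₁_div_two_notMem_lattice
    L.ω₂_div_two_notMem_lattice
    ((h₁.eq_zero_of_odd_at_half (hodd _ L.ω₁_div_two_notMem_lattice)).trans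
      (h₂.eq_zero_of_odd_at_half (hodd _ L.ω₂_div_two_notMem_lattice)).symm)
  set p := L.ω₁ / 2 - L.ω₂ / 2
  have hpz : ∀ᶠ z in 𝓝 0, p + z ∉ L.lattice :=
    ((continuous_const_add p).tendsto' 0 p (add_zero p)).eventually
      (L.isOpen_compl_lattice.eventually_mem L.half_sub_half_notMem_lattice)
  filter_upwards [L.compl_lattice_mem_nhdsNE 0, nhdsWithin_le_nhds hpz] with z hz hpz
  obtain ⟨x, rfl⟩ : ∃ x, z = L.ω₂ / 2 + x := ⟨z - L.ω₂ / 2, by ring⟩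
  rw [show p + (L.ω₂ / 2 + x) = L.ω₁ / 2 + x by ring] at hpz ⊢
  exact htrans ⟨hpz, hz⟩

theorem not_tendsto_sub_inv {f : ℂ → ℂ} (hf : DifferentiableOn ℂ f (L.lattice : Set ℂ)ᶜ)
    (h₁ : f.Periodic L.ω₁) (h₂ : f.Periodic L.ω₂) (c : ℂ) :
    ¬ Tendsto (fun z => f z - z⁻¹) (𝓝[≠] 0) (𝓝 c) := by
  intro hc
  have hlim : Tendsto (fun z => (f z - c) - z⁻¹) (𝓝[≠] 0) (𝓝 0) := by
    simpa [sub_right_comm] using hc.sub_const c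
  have hper {ω : ℂ} (h : f.Periodic ω) : (fun z => f z - c).Periodic ω := fun z => by
    simp only [h z]
  have hcont : ContinuousAt (fun z => f z - c) (L.ω₁ / 2 - L.ω₂ / 2) :=
    ((hf.sub_const c).differentiableAt
      (L.isOpen_compl_lattice.mem_nhds L.half_sub_half_notMem_lattice)).continuousAt
  exact not_eventually_const_add_eq_of_tendsto_sub_inv hcont hlim
    (eventually_add_half_sub_half_eq (hf.sub_const c) (hper h₁) (hper h₂) hlim)

end PeriodPair

theorem DifferentiableOn.matrix_trace {n 𝕜 E : Type*} [Fintype n] [NontriviallyNormedField 𝕜]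
    [CompleteSpace 𝕜] [NormedAddCommGroup E] [NormedSpace 𝕜 E] {A : E → Matrix n n 𝕜} {s : Set E}
    (hA : DifferentiableOn 𝕜 A s) : DifferentiableOn 𝕜 (fun z => (A z).trace) s :=
  (Matrix.traceLinearMap n 𝕜 𝕜).toContinuousLinearMap.differentiable.comp_differentiableOn hA

theorem Matrix.trace_mul_mul_self_of_mul_self_eq_one {n R : Type*} [Fintype n] [DecidableEq n]
    [CommRing R] {σ : Matrix n n R} (hσ : σ * σ = 1) (A : Matrix n n R) :
    (σ * A * σ).trace = A.trace := by
  rw [trace_mul_comm, ← Matrix.mul_assoc, hσ, Matrix.one_mul]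

lemma σ1_mul_self : σ1 * σ1 = 1 := by simp [σ1, Matrix.one_fin_two]

lemma σ3_mul_self : σ3 * σ3 = 1 := by simp [σ3, Matrix.one_fin_two]

def PeriodPair.ofHalfPeriods {ω₁ ω₃ : ℂ} (hind : LinearIndependent ℝ ![ω₁, ω₃]) :
    PeriodPair where
  ω₁ := 2 * ω₁
  ω₂ := 2 * ω₃
  indep := by
    refine LinearIndependent.pair_iff.mpr fun s t h => ?_
    have := LinearIndependent.pair_iff.mp hind (2 * s) (2 * t) (by
      rw [← h]; simp only [Complex.real_smul]; push_cast; ring)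
    constructor <;> linarith [this.1, this.2]

lemma PeriodPair.coe_lattice_ofHalfPeriods {ω₁ ω₃ : ℂ} (hind : LinearIndependent ℝ ![ω₁, ω₃]) :
    ((ofHalfPeriods hind).lattice : Set ℂ) = _root_.lattice ω₁ ω₃ := by
  ext z
  simp only [SetLike.mem_coe, mem_lattice, _root_.lattice, ofHalfPeriods]
  exact exists₂_congr fun m n => by constructor <;> rintro rfl <;> ring

/-- no element of `W₀` behaves as `z⁻¹ • 1 + O(z)` (in fact, `z⁻¹ • 1 + O(1)`)
at the origin: there is no `X ∈ W₀` such that `X(z) - z⁻¹ • 1` tends to a limit as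
`z → 0` along `ℂ ∖ Λ`. -/
theorem W0_no_scalar_pole (ω₁ ω₃ : ℂ)
    (hind : LinearIndependent ℝ ![ω₁, ω₃]) :
    ¬ ∃ X ∈ W0 ω₁ ω₃, ∃ L : Matrix (Fin 2) (Fin 2) ℂ,
      Tendsto (fun z : ℂ => X z - z⁻¹ • (1 : Matrix (Fin 2) (Fin 2) ℂ))
        (𝓝[(lattice ω₁ ω₃)ᶜ] 0) (𝓝 L) := by
  classical
  rintro ⟨X, ⟨hX, hX₁, -, hX₃⟩, M, hM⟩
  set P := PeriodPair.ofHalfPeriods hind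
  rw [← PeriodPair.coe_lattice_ofHalfPeriods hind] at hX hX₁ hX₃ hM
  set g : ℂ → ℂ := fun z => (X z).trace / 2
  have hper {ω : ℂ} {σ : Matrix (Fin 2) (Fin 2) ℂ} (hσ : σ * σ = 1)
      (h : ∀ z ∉ P.lattice, X (z + ω) = σ * X z * σ) : ∀ z ∉ P.lattice, g (z + ω) = g z :=
    fun z hz => by simp only [g, h z hz, Matrix.trace_mul_mul_self_of_mul_self_eq_one hσ]
  -- `X` is twisted periodic only off `Λ`; redefining `g` on `Λ` makes it periodic everywhere.
  refine P.not_tendsto_sub_inv (f := (P.lattice : Set ℂ).piecewise 0 g)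
    ((hX.matrix_trace.div_const 2).congr (piecewise_eqOn_compl _ _ _))
    (P.periodic_piecewise P.ω₁_mem_lattice (hper σ1_mul_self hX₁) fun _ => rfl)
    (P.periodic_piecewise P.ω₂_mem_lattice (hper σ3_mul_self hX₃) fun _ => rfl) (M.trace / 2) ?_
  have := ((continuous_id.matrix_trace.tendsto M).comp hM).div_const 2
  refine (this.mono_left (nhdsWithin_le_iff.mpr (P.compl_lattice_mem_nhdsNE 0))).congr' ?_
  filter_upwards [P.compl_lattice_mem_nhdsNE 0] with z hz
  rw [piecewise_eq_of_notMem _ _ _ hz]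
  simp only [id_eq, comp_apply, Matrix.trace_sub, Matrix.trace_smul, Matrix.trace_one,
    Fintype.card_fin, Nat.cast_ofNat, smul_eq_mul, g]
  ring
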